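/- arXiv:1312.7202 — 2 statements merged into one kernel-verified Lean document; each statement's English description precedes it below -/
import Mathlib

section
/- Let K be a number field of degree d with r_1 real embeddings and r_2 pairs of complex embeddings and discriminant D_K. For Q ≥ 1, the set Γ = {γ ∈ O_K : |γ|_v ≤ Q^{d_v} for all archimedean places v} has cardinality at most 2^{r_1+r_2} π^{r_2} (Q + θ)^d |D_K|^{-1/2}, where θ = max{1, max_σ (|σ(w_1)| + ... + |σ(w_d)|)} for a fixed Z-basis w_1,...,w_d of O_K. -/
/-!
Embed `𝓞 K` as a lattice in the mixed space `ℝ^r₁ × ℂ^r₂`, whose covolume is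
`2^(-r₂) √|D_K|`, and take the fundamental parallelotope `F` spanned by the images of the basis
`w₁, …, w_d`. At every place `v`, a point of `F` has absolute value at most
`∑ |σ_v(w_i)| ≤ θ`, so for `γ ∈ Γ` the translates `γ + F` are pairwise disjoint and lie in the
product of the intervals `[-(Q + θ), Q + θ]` at the real places and the discs of radius `Q + θ`
at the complex places. Comparing volumes gives
`#Γ · 2^(-r₂) √|D_K| ≤ 2^r₁ π^r₂ (Q + θ)^d`.
-/

open NumberField Module MeasureTheory MeasureTheory.Measure NumberField.mixedEmbedding
  NumberField.InfinitePlace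
open scoped ENNReal NNReal Pointwise

theorem MeasureTheory.IsAddFundamentalDomain.card_mul_measure_le {G α : Type*} [AddGroup G]
    [AddAction G α] [MeasurableSpace α] [MeasurableConstVAdd G α] {μ : Measure α}
    [VAddInvariantMeasure G α μ] {F B : Set α} (hF : IsAddFundamentalDomain G F μ) (s : Finset G)
    (hs : ∀ g ∈ s, g +ᵥ F ⊆ B) : s.card * μ F ≤ μ B :=
  calc (s.card : ℝ≥0∞) * μ F = ∑ g ∈ s, μ (g +ᵥ F) := by
        simp only [measure_vadd, Finset.sum_const, nsmul_eq_mul]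
    _ = μ (⋃ g ∈ s, g +ᵥ F) :=
        (measure_biUnion_finset₀ (fun g _ g' _ hne => hF.aedisjoint hne)
          fun g _ => hF.nullMeasurableSet_vadd g).symm
    _ ≤ μ B := measure_mono (Set.iUnion₂_subset hs)

namespace NumberField.mixedEmbedding

open scoped Classical

variable (K : Type*) [Field K]

abbrev convexBodyLE (f : InfinitePlace K → ℝ≥0) : Set (mixedSpace K) :=
  (Set.univ.pi fun w : {w : InfinitePlace K // IsReal w} => Metric.closedBall 0 (f w)) ×ˢ
    (Set.univ.pi fun w : {w : InfinitePlace K // IsComplex w} => Metric.closedBall 0 (f w))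

theorem mem_convexBodyLE {f : InfinitePlace K → ℝ≥0} {x : mixedSpace K} :
    x ∈ convexBodyLE K f ↔ ∀ w, normAtPlace w x ≤ f w := by
  simp only [Set.mem_prod, Set.mem_univ_pi, mem_closedBall_zero_iff]
  refine ⟨fun ⟨hr, hc⟩ w => ?_, fun h => ⟨fun w => ?_, fun w => ?_⟩⟩
  · obtain hw | hw := isReal_or_isComplex w
    · simpa [normAtPlace_apply_of_isReal hw] using hr ⟨w, hw⟩
    · simpa [normAtPlace_apply_of_isComplex hw] using hc ⟨w, hw⟩
  · simpa [normAtPlace_apply_of_isReal w.2] using h w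
  · simpa [normAtPlace_apply_of_isComplex w.2] using h w

variable [NumberField K]

theorem convexBodyLE_volume (f : InfinitePlace K → ℝ≥0) :
    volume (convexBodyLE K f) = volume (convexBodyLT K f) := by
  simp only [volume_eq_prod, prod_prod, volume_pi, pi_pi, addHaar_closedBall_eq_addHaar_ball]

noncomputable def integerLatticeEquiv : 𝓞 K ≃ₗ[ℤ] mixedEmbedding.integerLattice K :=
  LinearEquiv.ofInjective _ ((mixedEmbedding_injective K).comp RingOfIntegers.coe_injective)

variable {K}

theorem normAtPlace_le_sum_of_mem_fundamentalDomain {ι : Type*} [Fintype ι]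
    (c : Basis ι ℝ (mixedSpace K)) {y : mixedSpace K} (hy : y ∈ ZSpan.fundamentalDomain c)
    (w : InfinitePlace K) : normAtPlace w y ≤ ∑ i, normAtPlace w (c i) := by
  rw [ZSpan.mem_fundamentalDomain] at hy
  calc normAtPlace w y = normAtPlace w (∑ i, c.repr y i • c i) := by rw [c.sum_repr]
    _ ≤ ∑ i, normAtPlace w (c.repr y i • c i) :=
        Finset.le_sum_of_subadditive _ (map_zero _).le (normAtPlace_add_le w) _ _
    _ = ∑ i, |c.repr y i| * normAtPlace w (c i) := by simp only [normAtPlace_smul]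
    _ ≤ ∑ i, normAtPlace w (c i) := by
        refine Finset.sum_le_sum fun i _ => mul_le_of_le_one_left (normAtPlace_nonneg w _) ?_
        rw [abs_of_nonneg (hy i).1]
        exact (hy i).2.le

variable {ι : Type*} (b : Basis ι ℤ (𝓞 K))

noncomputable def integerLatticeBasis : Basis ι ℝ (mixedSpace K) :=
  (b.map (integerLatticeEquiv K)).ofZLatticeBasis ℝ _

theorem integerLatticeBasis_apply (i : ι) : integerLatticeBasis b i = mixedEmbedding K (b i) :=
  (b.map (integerLatticeEquiv K)).ofZLatticeBasis_apply ℝ _ i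

variable [Fintype ι]

theorem isAddFundamentalDomain_integerLatticeBasis :
    IsAddFundamentalDomain (mixedEmbedding.integerLattice K)
      (ZSpan.fundamentalDomain (integerLatticeBasis b)) := by
  rw [← (b.map (integerLatticeEquiv K)).ofZLatticeBasis_span ℝ]
  exact ZSpan.isAddFundamentalDomain _ volume

theorem card_mul_covolume_le (R : ℝ≥0) (s : Finset (𝓞 K))
    (hs : ∀ γ ∈ s, ∀ w : InfinitePlace K, w (γ : K) + ∑ i, w (b i : K) ≤ R) :
    s.card * ZLattice.covolume (mixedEmbedding.integerLattice K) ≤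
      2 ^ nrRealPlaces K * Real.pi ^ nrComplexPlaces K * R ^ finrank ℚ K := by
  -- instance search only finds this for the underlying additive subgroup
  have : VAddInvariantMeasure (mixedEmbedding.integerLattice K) (mixedSpace K) volume :=
    (inferInstance : VAddInvariantMeasure (mixedEmbedding.integerLattice K).toAddSubgroup _ _)
  have hF := isAddFundamentalDomain_integerLatticeBasis b
  have hpack := hF.card_mul_measure_le (s.map (integerLatticeEquiv K).toEquiv.toEmbedding)
    (B := convexBodyLE K fun _ => R) ?_
  · rw [Finset.card_map, convexBodyLE_volume, convexBodyLT_volume, Finset.prod_pow_eq_pow_sum,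
      sum_mult_eq, ← ENNReal.coe_mul] at hpack
    have := ENNReal.toReal_mono ENNReal.coe_ne_top hpack
    rwa [ENNReal.toReal_mul, ENNReal.toReal_natCast, ← measureReal_def,
      ← ZLattice.covolume_eq_measure_fundamentalDomain _ _ hF, ENNReal.coe_toReal] at this
  · rintro g hg _ ⟨y, hy, rfl⟩
    obtain ⟨γ, hγ, rfl⟩ := Finset.mem_map.1 hg
    refine (mem_convexBodyLE K).2 fun w => ?_
    have hy := normAtPlace_le_sum_of_mem_fundamentalDomain _ hy w
    simp only [integerLatticeBasis_apply, normAtPlace_apply] at hy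
    calc normAtPlace w (mixedEmbedding K γ + y)
        ≤ normAtPlace w (mixedEmbedding K γ) + normAtPlace w y := normAtPlace_add_le w _ _
      _ ≤ w (γ : K) + ∑ i, w (b i : K) := by rw [normAtPlace_apply]; gcongr
      _ ≤ R := hs γ hγ w

end NumberField.mixedEmbedding

theorem NumberField.finite_setOf_forall_infinitePlace_le {K : Type*} [Field K] [NumberField K]
    (Q : ℝ) : {γ : 𝓞 K | ∀ w : InfinitePlace K, w (γ : K) ≤ Q}.Finite :=
  ((Embeddings.finite_of_norm_le K ℂ Q).preimage RingOfIntegers.coe_injective.injOn).subset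
    fun γ hγ => ⟨RingOfIntegers.isIntegral_coe γ, fun φ => hγ (InfinitePlace.mk φ)⟩

/-- Quantitative version: the set `Γ = {γ ∈ O_K : |γ|_v ≤ Q^{d_v} for all archimedean v}` has
cardinality at most `2^(r₁+r₂) * π^(r₂) * (Q + θ)^d * |D_K|^(-1/2)`, where
`θ = max(1, max_σ (|σ w₁| + ⋯ + |σ w_d|))` for a `ℤ`-basis `w₁, …, w_d` of `O_K`. -/
theorem stmt_2 (K : Type*) [Field K] [NumberField K]
    (ι : Type*) [Fintype ι] (b : Basis ι ℤ (𝓞 K))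
    (θ : ℝ)
    (hθ : θ = max 1 (⨆ σ : K →+* ℂ, ∑ i, ‖σ (algebraMap (𝓞 K) K (b i))‖))
    (Q : ℝ) (hQ : 1 ≤ Q) :
    (Nat.card {γ : 𝓞 K | ∀ v : InfinitePlace K,
        v (algebraMap (𝓞 K) K γ) ^ v.mult ≤ Q ^ v.mult} : ℝ) ≤
      2 ^ (InfinitePlace.nrRealPlaces K + InfinitePlace.nrComplexPlaces K) *
        Real.pi ^ (InfinitePlace.nrComplexPlaces K) * (Q + θ) ^ (finrank ℚ K) *
        (Real.sqrt |(discr K : ℝ)|)⁻¹ := by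
  have hQ₀ : 0 ≤ Q := zero_le_one.trans hQ
  have hθ₀ : 0 ≤ θ := hθ ▸ zero_le_one.trans (le_max_left _ _)
  have hθw : ∀ w : InfinitePlace K, ∑ i, w (b i : K) ≤ θ := fun w => hθ ▸ le_max_of_le_right
    (by simpa only [← norm_embedding_eq] using le_ciSup (Set.finite_range
      fun σ : K →+* ℂ => ∑ i, ‖σ (algebraMap (𝓞 K) K (b i))‖).bddAbove w.embedding)
  have hΓ : {γ : 𝓞 K | ∀ v : InfinitePlace K, v (algebraMap (𝓞 K) K γ) ^ v.mult ≤ Q ^ v.mult} =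
      {γ : 𝓞 K | ∀ w : InfinitePlace K, w (γ : K) ≤ Q} := by
    ext γ
    exact forall_congr' fun v => pow_le_pow_iff_left₀ (apply_nonneg v _) hQ₀ mult_pos.ne'
  have hfin := finite_setOf_forall_infinitePlace_le (K := K) Q
  have hcount := card_mul_covolume_le b ⟨Q + θ, by positivity⟩ hfin.toFinset
    fun γ hγ w => add_le_add ((Set.Finite.mem_toFinset hfin).1 hγ w) (hθw w)
  rw [covolume_integerLattice] at hcount
  rw [hΓ, Nat.card_eq_card_finite_toFinset hfin]
  have hD : 0 < √|(discr K : ℝ)| := Real.sqrt_pos.2 (abs_pos.2 (by exact_mod_cast discr_ne_zero K))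
  calc (hfin.toFinset.card : ℝ)
      ≤ 2 ^ nrRealPlaces K * Real.pi ^ nrComplexPlaces K * (Q + θ) ^ finrank ℚ K /
          (2⁻¹ ^ nrComplexPlaces K * √|(discr K : ℝ)|) := (le_div_iff₀ (by positivity)).2 hcount
    _ = _ := by rw [pow_add, inv_pow, div_eq_mul_inv, mul_inv, inv_inv]; ring
end

section
/- Let K be a field and α̃_1, α̃_2, α̃_3 pairwise distinct nonzero elements of K, x, y ∈ K with xy ≠ 0, β_i = x − α̃_i y ≠ 0 for all i. The six-term sum T = ∑ over (i,j) ∈ E of sgn(i,j)·β_i α̃_j (with the sign convention of T = β_1α̃_2 − β_1α̃_3 + β_2α̃_3 − β_2α̃_1 + β_3α̃_1 − β_3α̃_2) cannot be decomposed into three vanishing subsums of two terms each. -/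
/-- The sign of the term indexed `(i,j)` in the six-term sum
`T = β₁α̃₂ - β₁α̃₃ + β₂α̃₃ - β₂α̃₁ + β₃α̃₁ - β₃α̃₂` (indices written `0,1,2`). -/
def tmSgn {K : Type*} [Field K] (p : Fin 3 × Fin 3) : K :=
  if p = (0, 1) ∨ p = (1, 2) ∨ p = (2, 0) then 1 else -1

/-- The index set `E` of ordered pairs `(i,j)`, `i ≠ j`. -/
def tmE : Finset (Fin 3 × Fin 3) := Finset.univ.filter fun p => p.1 ≠ p.2

/-!
The terms of sign `+1` are indexed by the three cyclic pairs `(0,1), (1,2), (2,0)`. Since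
three is odd, a partition of the six indices into pairs must contain a pair `{p, q}` with
`p = (i, j)` cyclic and `q = (k, l)` not. For such a pair either the rows agree, the columns
agree, or `q` is the transpose of `p`, and the two-term subsum is then `β_i (α̃_j - α̃_l)`,
`(α̃_k - α̃_i) y α̃_j` or `x (α̃_j - α̃_i)` respectively, none of which vanishes.
-/

open Finset

theorem Finset.even_card_of_forall_subset_or_disjoint {ι α : Type*} [DecidableEq α]
    {s : Finset ι} {E : ι → Finset α} {C : Finset α}
    (hE : (s : Set ι).PairwiseDisjoint E) (heven : ∀ i ∈ s, Even #(E i))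
    (hC : C ⊆ s.biUnion E) (hsplit : ∀ i ∈ s, E i ⊆ C ∨ Disjoint (E i) C) :
    Even #C := by
  have hCeq : C = s.biUnion fun i => E i ∩ C := by
    rw [← biUnion_inter, inter_eq_right.mpr hC]
  rw [hCeq, card_biUnion (hE.mono fun i => inter_subset_left)]
  refine Finset.even_sum _ fun i hi => ?_
  rcases hsplit i hi with hsub | hdisj
  · rw [inter_eq_left.mpr hsub]; exact heven i hi
  · simp [disjoint_iff_inter_eq_empty.mp hdisj]

def cyclicPairs : Finset (Fin 3 × Fin 3) := {(0, 1), (1, 2), (2, 0)}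

theorem tmSgn_eq_ite {K : Type*} [Field K] (p : Fin 3 × Fin 3) :
    (tmSgn p : K) = if p ∈ cyclicPairs then 1 else -1 := by
  simp [tmSgn, cyclicPairs]

theorem cyclicPairs_subset_tmE : cyclicPairs ⊆ tmE := by decide

theorem card_cyclicPairs : #cyclicPairs = 3 := rfl

theorem eq_fst_or_eq_snd_or_eq_swap_of_mem_cyclicPairs {p q : Fin 3 × Fin 3}
    (hp : p ∈ cyclicPairs) (hq : q ∈ tmE) (hqC : q ∉ cyclicPairs) :
    p.1 = q.1 ∨ p.2 = q.2 ∨ q = p.swap := by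
  revert p q; decide

section Field

variable {K : Type*} [Field K] {x y a b c : K}

theorem sub_mul_mul_ne_sub_mul_mul (hab : a ≠ b) (hy : y ≠ 0) (hc : c ≠ 0) :
    (x - a * y) * c ≠ (x - b * y) * c := by
  intro h
  have : (b - a) * y * c = 0 := by linear_combination h
  simp [sub_eq_zero, hab.symm, hy, hc] at this

theorem sub_mul_mul_ne_sub_mul_mul_swap (hab : a ≠ b) (hx : x ≠ 0) :
    (x - a * y) * b ≠ (x - b * y) * a := by
  intro h
  have : x * (b - a) = 0 := by linear_combination h
  simp [sub_eq_zero, hab.symm, hx] at this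

end Field

section SixTermSum

variable {K : Type*} [Field K] {a : Fin 3 → K} {x y : K} {β : Fin 3 → K}

theorem term_ne_of_mem_cyclicPairs (ha : ∀ i j, i ≠ j → a i ≠ a j) (ha0 : ∀ i, a i ≠ 0)
    (hxy : x * y ≠ 0) (hβ : ∀ i, β i = x - a i * y) (hβ0 : ∀ i, β i ≠ 0)
    {p q : Fin 3 × Fin 3} (hp : p ∈ cyclicPairs) (hq : q ∈ tmE) (hqC : q ∉ cyclicPairs) :
    β p.1 * a p.2 ≠ β q.1 * a q.2 := by
  have hpq : p ≠ q := ne_of_mem_of_not_mem hp hqC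
  rcases eq_fst_or_eq_snd_or_eq_swap_of_mem_cyclicPairs hp hq hqC with h | h | rfl
  · rw [← h]
    exact (mul_right_injective₀ (hβ0 _)).ne (ha _ _ fun h' => hpq (Prod.ext h h'))
  · rw [← h, hβ, hβ]
    exact sub_mul_mul_ne_sub_mul_mul (ha _ _ fun h' => hpq (Prod.ext h' h))
      (right_ne_zero_of_mul hxy) (ha0 _)
  · rw [Prod.fst_swap, Prod.snd_swap, hβ, hβ]
    exact sub_mul_mul_ne_sub_mul_mul_swap
      (ha _ _ (by simpa [tmE] using cyclicPairs_subset_tmE hp)) (left_ne_zero_of_mul hxy)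

theorem sum_ne_zero_of_not_disjoint_of_not_subset (ha : ∀ i j, i ≠ j → a i ≠ a j)
    (ha0 : ∀ i, a i ≠ 0) (hxy : x * y ≠ 0) (hβ : ∀ i, β i = x - a i * y)
    (hβ0 : ∀ i, β i ≠ 0) {E : Finset (Fin 3 × Fin 3)} (hE : E ⊆ tmE) (hcard : #E = 2)
    (hmeet : ¬Disjoint E cyclicPairs) (hnsub : ¬E ⊆ cyclicPairs) :
    ∑ p ∈ E, tmSgn p * β p.1 * a p.2 ≠ 0 := by
  obtain ⟨p, hpE, hp⟩ := not_disjoint_iff.mp hmeet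
  obtain ⟨q, hqE, hq⟩ := not_subset.mp hnsub
  have hpq : p ≠ q := ne_of_mem_of_not_mem hp hq
  have hEpq : E = {p, q} :=
    (eq_of_subset_of_card_le (insert_subset hpE (singleton_subset_iff.mpr hqE))
      (by rw [hcard, card_pair hpq])).symm
  rw [hEpq, sum_pair hpq, tmSgn_eq_ite, tmSgn_eq_ite, if_pos hp, if_neg hq, one_mul,
    neg_one_mul, neg_mul, ← sub_eq_add_neg, sub_ne_zero]
  exact term_ne_of_mem_cyclicPairs ha ha0 hxy hβ hβ0 hp (hE hqE) hq

end SixTermSum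

/-- With `α̃₁, α̃₂, α̃₃` pairwise distinct and nonzero, `xy ≠ 0`, `βᵢ = x - α̃ᵢ y ≠ 0`,
the six-term sum `T = ∑_{(i,j) ∈ E} sgn(i,j) βᵢ α̃ⱼ` cannot be decomposed into three
vanishing two-term subsums: there is no partition `E = E₁ ∪ E₂ ∪ E₃` into pairs with
each of the three corresponding two-term subsums equal to zero. -/
theorem stmt_8 (K : Type*) [Field K] (a : Fin 3 → K)
    (ha : ∀ i j, i ≠ j → a i ≠ a j) (ha0 : ∀ i, a i ≠ 0)
    (x y : K) (hxy : x * y ≠ 0)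
    (β : Fin 3 → K) (hβ : ∀ i, β i = x - a i * y) (hβ0 : ∀ i, β i ≠ 0) :
    ¬ ∃ E₁ E₂ E₃ : Finset (Fin 3 × Fin 3),
      E₁ ∪ E₂ ∪ E₃ = tmE ∧
      Disjoint E₁ E₂ ∧ Disjoint E₁ E₃ ∧ Disjoint E₂ E₃ ∧
      E₁.card = 2 ∧ E₂.card = 2 ∧ E₃.card = 2 ∧
      (∑ p ∈ E₁, tmSgn p * β p.1 * a p.2) = 0 ∧
      (∑ p ∈ E₂, tmSgn p * β p.1 * a p.2) = 0 ∧
      (∑ p ∈ E₃, tmSgn p * β p.1 * a p.2) = 0 := by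
  rintro ⟨E₁, E₂, E₃, hun, h12, h13, h23, hc1, hc2, hc3, hs1, hs2, hs3⟩
  set E : Fin 3 → Finset (Fin 3 × Fin 3) := ![E₁, E₂, E₃]
  have hunion : univ.biUnion E = tmE := by
    simp [E, Fin.univ_succ, ← hun, union_assoc]
  have hdisj : ((univ : Finset (Fin 3)) : Set (Fin 3)).PairwiseDisjoint E := by
    intro i _ j _ hij
    fin_cases i <;> fin_cases j <;> simp_all [E, Function.onFun, disjoint_comm]
  have hcard : ∀ i, #(E i) = 2 := by
    intro i; fin_cases i <;> assumption
  have hsum : ∀ i, ∑ p ∈ E i, tmSgn p * β p.1 * a p.2 = 0 := by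
    intro i; fin_cases i <;> assumption
  obtain ⟨i, hmixed⟩ : ∃ i, ¬(E i ⊆ cyclicPairs ∨ Disjoint (E i) cyclicPairs) := by
    by_contra! h
    have heven : Even #cyclicPairs :=
      even_card_of_forall_subset_or_disjoint hdisj (fun i _ => hcard i ▸ even_two)
        (hunion ▸ cyclicPairs_subset_tmE) (fun i _ => h i)
    rw [card_cyclicPairs] at heven
    exact absurd heven (by decide)
  obtain ⟨hnsub, hmeet⟩ := not_or.mp hmixed
  exact sum_ne_zero_of_not_disjoint_of_not_subset ha ha0 hxy hβ hβ0
    (hunion ▸ subset_biUnion_of_mem E (mem_univ i)) (hcard i) hmeet hnsub (hsum i)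
end
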